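/- Let B be a braided category, (M, Φ) a B-module category, E a braided B-module structure on (M, Φ), and A, B, C monoid objects in B. Let M ∈ M be an (A ⊗^τ B ⊗^τ C)-module, with induced actions ρ_A, ρ_B, ρ_C. Then twisting the C-action and then the B-action agrees with twisting the (B ⊗^τ C)-action: the (B⊗C)-action ρ_{B⊗C} ∘ E_{B⊗C,M} (where ρ_{B⊗C} = ρ_B ∘ Φ(B)(ρ_C) via the structure isomorphism (B⊗C)·M ≅ B·(C·M)) equals the (B⊗C)-action (ρ_B ∘ E_{B,M}) ∘ Φ(B)(ρ_C ∘ E_{C,M}); together with the unchanged A-action this makes M a (B ⊗^τ C ⊗^τ A)-module, i.e. ^B(^C M) = ^{B⊗^τ C} M. -/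

import Mathlib

/-! (C2) says `E_{X⊗Y}` is `Φ(X)(E_Y)` followed by `E_X`, and naturality of `E` in the module
variable lets `E_X` slide past `Φ(X)(ρ_Y)`: this is the identity `^B(^C M) = ^{B⊗C} M` on
actions. Since moreover `E_𝟙 = id` (an idempotent isomorphism, by (C2) and the triangle axiom),
each twisted action is again unital and associative. Naturality of `E` along the braiding makes
the twisted `B`- and `C`-actions compatible, and (C1) moves the twist of `B` or `C` past the
untwisted `A`-action, which exchanges the roles of the two factors. -/

open CategoryTheory MonoidalCategory

universe v u v₂ u₂

variable {𝓑 : Type u} [Category.{v} 𝓑] [MonoidalCategory 𝓑] [BraidedCategory 𝓑]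
variable {𝓜 : Type u₂} [Category.{v₂} 𝓜]

/-- A (left) module category over a monoidal category `𝓑`, presented as data: an action
bifunctor together with coherent unit and associativity structure isomorphisms. -/
structure ModuleCategoryStruct (𝓑 : Type u) (𝓜 : Type u₂) [Category.{v} 𝓑]
    [MonoidalCategory 𝓑] [Category.{v₂} 𝓜] where
  act : 𝓑 ⥤ 𝓜 ⥤ 𝓜
  unitIso : act.obj (𝟙_ 𝓑) ≅ 𝟭 𝓜
  assocIso : ∀ X Y : 𝓑, act.obj (X ⊗ Y) ≅ act.obj Y ⋙ act.obj X
  assoc_natural : ∀ {X X' Y Y' : 𝓑} (f : X ⟶ X') (g : Y ⟶ Y'),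
    act.map (f ⊗ₘ g) ≫ (assocIso X' Y').hom =
      (assocIso X Y).hom ≫ CategoryTheory.Functor.whiskerRight (act.map g) (act.obj X) ≫
        CategoryTheory.Functor.whiskerLeft (act.obj Y') (act.map f)
  pentagon : ∀ X Y Z : 𝓑,
    (assocIso (X ⊗ Y) Z).hom ≫ CategoryTheory.Functor.whiskerLeft (act.obj Z) (assocIso X Y).hom =
      act.map (α_ X Y Z).hom ≫ (assocIso X (Y ⊗ Z)).hom ≫
        CategoryTheory.Functor.whiskerRight (assocIso Y Z).hom (act.obj X)
  triangle_right : ∀ X : 𝓑,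
    act.map (ρ_ X).hom =
      (assocIso X (𝟙_ 𝓑)).hom ≫ CategoryTheory.Functor.whiskerRight unitIso.hom (act.obj X)
  triangle_left : ∀ X : 𝓑,
    act.map (λ_ X).hom =
      (assocIso (𝟙_ 𝓑) X).hom ≫ CategoryTheory.Functor.whiskerLeft (act.obj X) unitIso.hom

namespace ModuleCategoryStruct

variable (D : ModuleCategoryStruct 𝓑 𝓜)

/-- Notation helper: the action of `X : 𝓑` on `m : 𝓜`. -/
def smul (X : 𝓑) (m : 𝓜) : 𝓜 := (D.act.obj X).obj m

/-- A braided `𝓑`-module structure on a module category `(𝓜, Φ)`: a family of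
isomorphisms `E_{X,m} : X·m ⟶ X·m`, natural in `X` and `m`, satisfying (C1) and (C2). -/
structure BraidedModuleStructure where
  E : ∀ (X : 𝓑) (m : 𝓜), D.smul X m ⟶ D.smul X m
  iso : ∀ (X : 𝓑) (m : 𝓜), IsIso (E X m)
  nat_left : ∀ {X X' : 𝓑} (f : X ⟶ X') (m : 𝓜),
    (D.act.map f).app m ≫ E X' m = E X m ≫ (D.act.map f).app m
  nat_right : ∀ (X : 𝓑) {m m' : 𝓜} (g : m ⟶ m'),
    (D.act.obj X).map g ≫ E X m' = E X m ≫ (D.act.obj X).map g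
  C1 : ∀ (X Y : 𝓑) (m : 𝓜),
    E Y (D.smul X m) =
      (D.assocIso Y X).inv.app m ≫ (D.act.map (β_ X Y).inv).app m ≫
        (D.assocIso X Y).hom.app m ≫ (D.act.obj X).map (E Y m) ≫
        (D.assocIso X Y).inv.app m ≫ (D.act.map (β_ Y X).inv).app m ≫
        (D.assocIso Y X).hom.app m
  C2 : ∀ (X Y : 𝓑) (m : 𝓜),
    E (Y ⊗ X) m =
      (D.assocIso Y X).hom.app m ≫ (D.act.obj Y).map (E X m) ≫ E Y (D.smul X m) ≫
        (D.assocIso Y X).inv.app m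

/-- A stable structure on a braided `𝓑`-module: a natural automorphism `ς` of the
identity functor of `𝓜` with `E_{X,m} = ς_{X·m} ∘ Φ(X)(ς_m)⁻¹`. -/
structure StableStructure (Eb : D.BraidedModuleStructure) where
  ς : ∀ m : 𝓜, m ≅ m
  natural : ∀ {m m' : 𝓜} (g : m ⟶ m'), (ς m).hom ≫ g = g ≫ (ς m').hom
  stability : ∀ (X : 𝓑) (m : 𝓜),
    Eb.E X m = (D.act.obj X).map (ς m).inv ≫ (ς (D.smul X m)).hom

/-- An `A`-module in `𝓜`, for a monoid object `A` in `𝓑`: an object `m` with a unital,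
associative action `ρ : A·m ⟶ m`. -/
structure IsModuleObject (A : Mon 𝓑) (m : 𝓜) (ρ : D.smul A.X m ⟶ m) : Prop where
  unital : (D.act.map (MonObj.one (X := A.X))).app m ≫ ρ = D.unitIso.hom.app m
  assoc : (D.assocIso A.X A.X).hom.app m ≫ (D.act.obj A.X).map ρ ≫ ρ =
    (D.act.map (MonObj.mul (X := A.X))).app m ≫ ρ

end ModuleCategoryStruct

open ModuleCategoryStruct

/-- Compatibility of an `X`-action and a `Y`-action making `m` an `(X ⊗^τ Y)`-module:
`ρ_X ∘ Φ(X)(ρ_Y) = ρ_Y ∘ Φ(Y)(ρ_X) ∘ Φ((τ_{Y,X})⁻¹)_m`. -/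
def ActionsCompatible (D : ModuleCategoryStruct 𝓑 𝓜) (X Y : 𝓑) (m : 𝓜)
    (ρX : D.smul X m ⟶ m) (ρY : D.smul Y m ⟶ m) : Prop :=
  (D.assocIso X Y).hom.app m ≫ (D.act.obj X).map ρY ≫ ρX =
    (D.act.map (β_ Y X).inv).app m ≫ (D.assocIso Y X).hom.app m ≫
      (D.act.obj Y).map ρX ≫ ρY

theorem CategoryTheory.Functor.map_hom_app_of_iso_id {C : Type*} [Category C] {F : C ⥤ C}
    (e : F ≅ 𝟭 C) (X : C) : F.map (e.hom.app X) = e.hom.app (F.obj X) :=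
  (cancel_mono (e.hom.app X)).1 (e.hom.naturality (e.hom.app X))

namespace ModuleCategoryStruct

attribute [reducible] smul

variable {D : ModuleCategoryStruct 𝓑 𝓜}

namespace BraidedModuleStructure

variable (Eb : D.BraidedModuleStructure)

theorem E_tensor_hom_app (X Y : 𝓑) (m : 𝓜) :
    Eb.E (X ⊗ Y) m ≫ (D.assocIso X Y).hom.app m =
      (D.assocIso X Y).hom.app m ≫ (D.act.obj X).map (Eb.E Y m) ≫ Eb.E X (D.smul Y m) := by
  simp [Eb.C2]

theorem E_tensorUnit (m : 𝓜) : Eb.E (𝟙_ 𝓑) m = 𝟙 _ := by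
  have := Eb.iso (𝟙_ 𝓑) m
  -- naturality of `E` along `λ_ 𝟙 : 𝟙 ⊗ 𝟙 ⟶ 𝟙`, read through the triangle axiom and (C2)
  have hlam : D.unitIso.hom.app (D.smul (𝟙_ 𝓑) m) ≫ Eb.E (𝟙_ 𝓑) m =
      (D.act.obj (𝟙_ 𝓑)).map (Eb.E (𝟙_ 𝓑) m) ≫ Eb.E (𝟙_ 𝓑) (D.smul (𝟙_ 𝓑) m) ≫
        D.unitIso.hom.app (D.smul (𝟙_ 𝓑) m) := by
    have h := Eb.nat_left (λ_ (𝟙_ 𝓑)).hom m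
    rw [D.triangle_left, NatTrans.comp_app, Category.assoc,
      reassoc_of% (Eb.E_tensor_hom_app (𝟙_ 𝓑) (𝟙_ 𝓑) m)] at h
    exact (cancel_epi _).1 h
  rw [← Functor.map_hom_app_of_iso_id D.unitIso m, ← Eb.nat_right,
    Functor.map_hom_app_of_iso_id, ← Category.assoc, D.unitIso.hom.naturality, Functor.id_map,
    Category.assoc] at hlam
  have idem : Eb.E (𝟙_ 𝓑) m ≫ Eb.E (𝟙_ 𝓑) m = Eb.E (𝟙_ 𝓑) m ≫ 𝟙 _ := by
    rw [Category.comp_id]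
    exact ((cancel_epi _).1 hlam).symm
  exact (cancel_epi _).1 idem

theorem E_tensor_comp_action (X Y : 𝓑) (m : 𝓜) (ρX : D.smul X m ⟶ m)
    (ρY : D.smul Y m ⟶ m) :
    Eb.E (X ⊗ Y) m ≫ (D.assocIso X Y).hom.app m ≫ (D.act.obj X).map ρY ≫ ρX =
      (D.assocIso X Y).hom.app m ≫ (D.act.obj X).map (Eb.E Y m ≫ ρY) ≫ Eb.E X m ≫ ρX := by
  rw [reassoc_of% (Eb.E_tensor_hom_app X Y m), ← reassoc_of% (Eb.nat_right X ρY),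
    Functor.map_comp, Category.assoc]

end BraidedModuleStructure

variable (Eb : D.BraidedModuleStructure)

theorem IsModuleObject.twist {A : Mon 𝓑} {m : 𝓜} {ρ : D.smul A.X m ⟶ m}
    (h : D.IsModuleObject A m ρ) : D.IsModuleObject A m (Eb.E A.X m ≫ ρ) where
  unital := by
    rw [← Category.assoc, Eb.nat_left, Eb.E_tensorUnit, Category.id_comp, h.unital]
  assoc := by
    rw [← Eb.E_tensor_comp_action, h.assoc, reassoc_of% (Eb.nat_left MonObj.mul m)]

end ModuleCategoryStruct

open ModuleCategoryStruct

namespace ActionsCompatible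

variable {D : ModuleCategoryStruct 𝓑 𝓜} (Eb : D.BraidedModuleStructure) {X Y : 𝓑} {m : 𝓜}
  {ρX : D.smul X m ⟶ m} {ρY : D.smul Y m ⟶ m}

theorem twist_swap (h : ActionsCompatible D X Y m ρX ρY) :
    ActionsCompatible D Y X m (Eb.E Y m ≫ ρY) ρX := by
  have h' : (D.act.obj X).map ρY ≫ ρX =
      (D.assocIso X Y).inv.app m ≫ (D.act.map (β_ Y X).inv).app m ≫
        (D.assocIso Y X).hom.app m ≫ (D.act.obj Y).map ρX ≫ ρY := by
    rw [← h, Iso.inv_hom_id_app_assoc]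
  unfold ActionsCompatible
  rw [Functor.map_comp, Category.assoc, h', reassoc_of% (Eb.nat_right Y ρX), Eb.C1 X Y m]
  simp only [Category.assoc, Iso.hom_inv_id_app_assoc]

theorem twist_twist (h : ActionsCompatible D X Y m ρX ρY) :
    ActionsCompatible D X Y m (Eb.E X m ≫ ρX) (Eb.E Y m ≫ ρY) := by
  unfold ActionsCompatible at h ⊢
  rw [← Eb.E_tensor_comp_action, ← Eb.E_tensor_comp_action, h,
    reassoc_of% (Eb.nat_left (β_ Y X).inv m)]

end ActionsCompatible

theorem twist_twice_eq_twist_tensor_general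
    (D : ModuleCategoryStruct 𝓑 𝓜) (Eb : D.BraidedModuleStructure)
    (A B C : Mon 𝓑) (m : 𝓜)
    (ρA : D.smul A.X m ⟶ m) (ρB : D.smul B.X m ⟶ m) (ρC : D.smul C.X m ⟶ m)
    (hB : D.IsModuleObject B m ρB)
    (hC : D.IsModuleObject C m ρC)
    (hAB : ActionsCompatible D A.X B.X m ρA ρB)
    (hAC : ActionsCompatible D A.X C.X m ρA ρC)
    (hBC : ActionsCompatible D B.X C.X m ρB ρC) :
    -- the `(B⊗C)`-action `ρ_{B⊗C} ∘ E_{B⊗C,m}` equals the `(B⊗C)`-action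
    -- `(ρ_B ∘ E_{B,m}) ∘ Φ(B)(ρ_C ∘ E_{C,m})`
    (Eb.E (B.X ⊗ C.X) m ≫ (D.assocIso B.X C.X).hom.app m ≫
        (D.act.obj B.X).map ρC ≫ ρB =
      (D.assocIso B.X C.X).hom.app m ≫
        (D.act.obj B.X).map (Eb.E C.X m ≫ ρC) ≫ Eb.E B.X m ≫ ρB) ∧
    -- together with the unchanged `A`-action, the twisted actions make `m` a
    -- `(B ⊗^τ C ⊗^τ A)`-module
    D.IsModuleObject B m (Eb.E B.X m ≫ ρB) ∧
    D.IsModuleObject C m (Eb.E C.X m ≫ ρC) ∧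
    ActionsCompatible D B.X C.X m (Eb.E B.X m ≫ ρB) (Eb.E C.X m ≫ ρC) ∧
    ActionsCompatible D B.X A.X m (Eb.E B.X m ≫ ρB) ρA ∧
    ActionsCompatible D C.X A.X m (Eb.E C.X m ≫ ρC) ρA :=
  ⟨Eb.E_tensor_comp_action B.X C.X m ρB ρC, hB.twist Eb, hC.twist Eb, hBC.twist_twist Eb,
    hAB.twist_swap Eb, hAC.twist_swap Eb⟩

/-- for an `(A ⊗^τ B ⊗^τ C)`-module `m` with induced actions
`ρA, ρB, ρC`, twisting the `C`-action and then the `B`-action agrees with twisting the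
`(B ⊗^τ C)`-action, and together with the unchanged `A`-action this makes `m` a
`(B ⊗^τ C ⊗^τ A)`-module, i.e. `^B(^C m) = ^{B ⊗^τ C} m`. -/
theorem twist_twice_eq_twist_tensor
    (D : ModuleCategoryStruct 𝓑 𝓜) (Eb : D.BraidedModuleStructure)
    (A B C : Mon 𝓑) (m : 𝓜)
    (ρA : D.smul A.X m ⟶ m) (ρB : D.smul B.X m ⟶ m) (ρC : D.smul C.X m ⟶ m)
    (hA : D.IsModuleObject A m ρA) (hB : D.IsModuleObject B m ρB)
    (hC : D.IsModuleObject C m ρC)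
    (hAB : ActionsCompatible D A.X B.X m ρA ρB)
    (hAC : ActionsCompatible D A.X C.X m ρA ρC)
    (hBC : ActionsCompatible D B.X C.X m ρB ρC) :
    -- the `(B⊗C)`-action `ρ_{B⊗C} ∘ E_{B⊗C,m}` equals the `(B⊗C)`-action
    -- `(ρ_B ∘ E_{B,m}) ∘ Φ(B)(ρ_C ∘ E_{C,m})`
    (Eb.E (B.X ⊗ C.X) m ≫ (D.assocIso B.X C.X).hom.app m ≫
        (D.act.obj B.X).map ρC ≫ ρB =
      (D.assocIso B.X C.X).hom.app m ≫
        (D.act.obj B.X).map (Eb.E C.X m ≫ ρC) ≫ Eb.E B.X m ≫ ρB) ∧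
    -- together with the unchanged `A`-action, the twisted actions make `m` a
    -- `(B ⊗^τ C ⊗^τ A)`-module
    D.IsModuleObject B m (Eb.E B.X m ≫ ρB) ∧
    D.IsModuleObject C m (Eb.E C.X m ≫ ρC) ∧
    ActionsCompatible D B.X C.X m (Eb.E B.X m ≫ ρB) (Eb.E C.X m ≫ ρC) ∧
    ActionsCompatible D B.X A.X m (Eb.E B.X m ≫ ρB) ρA ∧
    ActionsCompatible D C.X A.X m (Eb.E C.X m ≫ ρC) ρA :=
  twist_twice_eq_twist_tensor_general D Eb A B C m ρA ρB ρC hB hC hAB hAC hBC
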